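/- Let n be a natural number and f : Finset (Fin n) → Fin n → Prop a feasibility predicate, where f S o means that moving object o to its goal is feasible when exactly the objects of S have already been moved to their goals. Define the step relation on Finset (Fin n) by step S T ↔ ∃ o ∉ S, T = insert o S ∧ f S o. Then the following are equivalent: (1) there exists a list L of elements of Fin n with no duplicates whose elements are all of Fin n, such that for every index k < n, f ((L.take k).toFinset) (L.get k) holds; (2) Finset.univ is reachable from ∅ under the reflexive-transitive closure of step. In other words, the monotone instance admits a feasible solution ordering if and only if the full set is reachable from the empty set in the subset transition graph. -/

import Mathlib

/-! The prefix sets of a feasible order `L` are the vertices of a path from `∅` to `L.toFinset`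
in the subset graph, and conversely the objects inserted along such a path, in order, form a
feasible order. Both directions go by appending one object at a time. -/

variable {α : Type*} [DecidableEq α]

theorem List.forall_fin_length_append_singleton {P : Finset α → α → Prop} {L : List α} {o : α} :
    (∀ k : Fin (L ++ [o]).length, P ((L ++ [o]).take k).toFinset ((L ++ [o]).get k)) ↔
      (∀ k : Fin L.length, P (L.take k).toFinset (L.get k)) ∧ P L.toFinset o := by
  constructor
  · intro h
    refine ⟨fun ⟨k, hk⟩ => ?_, ?_⟩
    · simpa [List.take_append_of_le_length hk.le, List.getElem_append_left hk]
        using h ⟨k, by simp; omega⟩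
    · simpa using h ⟨L.length, by simp⟩
  · rintro ⟨hL, ho⟩ ⟨k, hk⟩
    obtain hk | rfl : k < L.length ∨ k = L.length := by simp at hk; omega
    · simpa [List.take_append_of_le_length hk.le, List.getElem_append_left hk] using hL ⟨k, hk⟩
    · simpa using ho

theorem List.toFinset_append_singleton (L : List α) (o : α) :
    (L ++ [o]).toFinset = insert o L.toFinset := by
  ext; simp

section

variable (f : Finset α → α → Prop)

def InsertStep (S T : Finset α) : Prop :=
  ∃ o, o ∉ S ∧ T = insert o S ∧ f S o

def IsFeasibleOrder (L : List α) : Prop :=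
  L.Nodup ∧ ∀ k : Fin L.length, f (L.take k).toFinset (L.get k)

variable {f}

theorem isFeasibleOrder_append_singleton {L : List α} {o : α} :
    IsFeasibleOrder f (L ++ [o]) ↔ IsFeasibleOrder f L ∧ o ∉ L ∧ f L.toFinset o := by
  rw [IsFeasibleOrder, IsFeasibleOrder, ← List.concat_eq_append, List.nodup_concat,
    List.concat_eq_append, List.forall_fin_length_append_singleton]
  tauto

theorem IsFeasibleOrder.reflTransGen_insertStep {L : List α} (hL : IsFeasibleOrder f L) :
    Relation.ReflTransGen (InsertStep f) ∅ L.toFinset := by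
  induction L using List.reverseRecOn with
  | nil => exact .refl
  | append_singleton L o ih =>
    obtain ⟨hL, hoL, ho⟩ := isFeasibleOrder_append_singleton.mp hL
    rw [List.toFinset_append_singleton]
    exact (ih hL).tail ⟨o, by simpa using hoL, rfl, ho⟩

theorem exists_isFeasibleOrder_of_reflTransGen {S : Finset α}
    (hS : Relation.ReflTransGen (InsertStep f) ∅ S) :
    ∃ L, IsFeasibleOrder f L ∧ L.toFinset = S := by
  induction hS with
  | refl => exact ⟨[], ⟨List.nodup_nil, fun k => k.elim0⟩, rfl⟩
  | tail _ hstep ih =>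
    obtain ⟨L, hL, rfl⟩ := ih
    obtain ⟨o, hoL, rfl, ho⟩ := hstep
    exact ⟨L ++ [o], isFeasibleOrder_append_singleton.mpr ⟨hL, by simpa using hoL, ho⟩,
      L.toFinset_append_singleton o⟩

theorem reflTransGen_insertStep_empty_iff {S : Finset α} :
    Relation.ReflTransGen (InsertStep f) ∅ S ↔ ∃ L, IsFeasibleOrder f L ∧ L.toFinset = S :=
  ⟨exists_isFeasibleOrder_of_reflTransGen, fun ⟨_, hL, hS⟩ => hS ▸ hL.reflTransGen_insertStep⟩

end

theorem monotone_solution_iff_reachable (n : ℕ)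
    (f : Finset (Fin n) → Fin n → Prop) :
    (∃ L : List (Fin n), L.Nodup ∧ (∀ x : Fin n, x ∈ L) ∧
      ∀ k : Fin L.length, f ((L.take k).toFinset) (L.get k)) ↔
    Relation.ReflTransGen
      (fun S T : Finset (Fin n) => ∃ o, o ∉ S ∧ T = insert o S ∧ f S o)
      ∅ Finset.univ := by
  change _ ↔ Relation.ReflTransGen (InsertStep f) ∅ _
  rw [reflTransGen_insertStep_empty_iff]
  simp only [IsFeasibleOrder, Finset.eq_univ_iff_forall, List.mem_toFinset]
  tauto
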